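/- arXiv:1002.0672 — 7 statements merged into one kernel-verified Lean document; each statement's English description precedes it below -/
import Mathlib

section
/- For 0 < p < q and any vector x ∈ R^N, the error of best s-term approximation in ℓ_q satisfies σ_s(x)_q ≤ s^{-(1/p-1/q)} ||x||_p. -/
/-- The ℓp (quasi-)norm on ℝ^N: `(∑ |x ℓ|^p)^(1/p)`. -/
noncomputable def pnorm (p : ℝ) {N : ℕ} (x : Fin N → ℝ) : ℝ :=
  (∑ i, |x i| ^ p) ^ (1 / p)

/-- A vector is `s`-sparse if at most `s` of its coordinates are nonzero. -/
def IsSparse (s : ℕ) {N : ℕ} (z : Fin N → ℝ) : Prop :=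
  ∃ S : Finset (Fin N), S.card ≤ s ∧ ∀ i ∉ S, z i = 0

/-- The error of best `s`-term approximation of `x` in `ℓ_q`. -/
noncomputable def bestApprox (s : ℕ) (q : ℝ) {N : ℕ} (x : Fin N → ℝ) : ℝ :=
  sInf {r | ∃ z : Fin N → ℝ, IsSparse s z ∧ r = pnorm q (x - z)}

/-! Keep the `s` largest entries of `x`. Each discarded entry is dominated by all `s` kept ones,
so `s |xⱼ|^p ≤ ‖x‖ₚ^p`; writing `|xⱼ|^q = (|xⱼ|^p)^(q/p)` and pulling out `q/p - 1` powers of this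
bound gives `σₛ(x)_q^q ≤ (‖x‖ₚ^p / s)^(q/p - 1) ‖x‖ₚ^p`, which is the claim. -/

open Finset Real

lemma Finset.exists_card_eq_forall_notMem_le_of_mem {ι α : Type*} [Fintype ι] [DecidableEq ι]
    [LinearOrder α] (f : ι → α) {t : ℕ} (ht : t ≤ Fintype.card ι) :
    ∃ S : Finset ι, S.card = t ∧ ∀ j ∉ S, ∀ i ∈ S, f j ≤ f i := by
  induction t with
  | zero => exact ⟨∅, rfl, by simp⟩
  | succ t ih =>
    obtain ⟨S, hcard, hS⟩ := ih (Nat.le_of_succ_le ht)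
    have hne : Sᶜ.Nonempty := by
      rw [← card_pos, card_compl, hcard]
      omega
    obtain ⟨k, hk, hk_max⟩ := Sᶜ.exists_max_image f hne
    have hkS : k ∉ S := mem_compl.mp hk
    refine ⟨insert k S, by rw [card_insert_of_notMem hkS, hcard], fun j hj i hi => ?_⟩
    have hjS : j ∉ S := fun h => hj (mem_insert_of_mem h)
    rcases mem_insert.mp hi with rfl | hi
    · exact hk_max j (mem_compl.mpr hjS)
    · exact hS j hjS i hi

lemma sum_rpow_le_rpow_sub_one_mul_sum {ι : Type*} (T : Finset ι) {a : ι → ℝ} {M r : ℝ}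
    (ha : ∀ i ∈ T, 0 ≤ a i) (haM : ∀ i ∈ T, a i ≤ M) (hr : 1 ≤ r) :
    ∑ i ∈ T, a i ^ r ≤ M ^ (r - 1) * ∑ i ∈ T, a i := by
  rw [mul_sum]
  refine sum_le_sum fun i hi => ?_
  calc a i ^ r = a i ^ (r - 1) * a i := by
        rw [← rpow_add_one' (ha i hi) (by linarith), sub_add_cancel]
    _ ≤ M ^ (r - 1) * a i :=
        mul_le_mul_of_nonneg_right (rpow_le_rpow (ha i hi) (haM i hi) (by linarith)) (ha i hi)

lemma pnorm_nonneg (p : ℝ) {N : ℕ} (x : Fin N → ℝ) : 0 ≤ pnorm p x := by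
  unfold pnorm
  positivity

lemma bestApprox_le_pnorm_sub {s : ℕ} (q : ℝ) {N : ℕ} (x : Fin N → ℝ) {z : Fin N → ℝ}
    (hz : IsSparse s z) : bestApprox s q x ≤ pnorm q (x - z) :=
  csInf_le ⟨0, by rintro _ ⟨w, -, rfl⟩; exact pnorm_nonneg q _⟩ ⟨z, hz, rfl⟩

lemma exists_isSparse_forall_abs_sub_le {p : ℝ} (hp : 0 < p) (s : ℕ) {N : ℕ} (x : Fin N → ℝ) :
    ∃ z : Fin N → ℝ, IsSparse s z ∧
      ∀ i, |(x - z) i| ≤ |x i| ∧ s * |(x - z) i| ^ p ≤ ∑ j, |x j| ^ p := by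
  obtain ⟨S, hS_card, hS_top⟩ := exists_card_eq_forall_notMem_le_of_mem (fun i => |x i|)
    (t := min s N) (by simp)
  refine ⟨fun i => if i ∈ S then x i else 0, ⟨S, by omega, fun i hi => if_neg hi⟩, fun i => ?_⟩
  by_cases hi : i ∈ S
  · simp only [Pi.sub_apply, if_pos hi, sub_self, abs_zero, zero_rpow hp.ne', mul_zero]
    exact ⟨abs_nonneg _, by positivity⟩
  · simp only [Pi.sub_apply, if_neg hi, sub_zero, le_refl, true_and]
    have hS_card' : S.card = s := by
      have := card_lt_univ_of_notMem hi
      rw [Fintype.card_fin] at this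
      omega
    calc (s : ℝ) * |x i| ^ p = S.card • |x i| ^ p := by rw [hS_card', nsmul_eq_mul]
      _ ≤ ∑ j ∈ S, |x j| ^ p :=
          card_nsmul_le_sum _ _ _ fun j hj => rpow_le_rpow (abs_nonneg _) (hS_top i hi j hj) hp.le
      _ ≤ ∑ j, |x j| ^ p := sum_le_univ_sum_of_nonneg fun j => by positivity

lemma div_rpow_sub_one_mul_self_rpow_one_div {A s p q : ℝ} (hA : 0 ≤ A) (hs : 0 < s) (hp : 0 < p)
    (hq : 0 < q) :
    ((A / s) ^ (q / p - 1) * A) ^ (1 / q) = s ^ (-(1 / p - 1 / q)) * A ^ (1 / p) := by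
  rw [div_rpow hA hs.le, div_mul_eq_mul_div,
    ← rpow_add_one' hA (by rw [sub_add_cancel]; positivity), sub_add_cancel,
    div_rpow (by positivity) (by positivity), ← rpow_mul hA, ← rpow_mul hs.le,
    div_eq_mul_inv, ← rpow_neg hs.le, mul_comm]
  congr 2 <;> field_simp

/-- For `0 < p < q`, `σ_s(x)_q ≤ s^{-(1/p-1/q)} ‖x‖_p`. -/
theorem bestApprox_le {N : ℕ} (p q : ℝ) (hp : 0 < p) (hpq : p < q)
    (s : ℕ) (hs : 0 < s) (x : Fin N → ℝ) :
    bestApprox s q x ≤ (s : ℝ) ^ (-(1 / p - 1 / q)) * pnorm p x := by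
  have hq : 0 < q := hp.trans hpq
  have hs' : (0 : ℝ) < s := Nat.cast_pos.mpr hs
  set A := ∑ j, |x j| ^ p
  obtain ⟨z, hz, hxz⟩ := exists_isSparse_forall_abs_sub_le hp s x
  have h_tail : ∑ i, |(x - z) i| ^ q ≤ (A / s) ^ (q / p - 1) * A := by
    calc ∑ i, |(x - z) i| ^ q = ∑ i, (|(x - z) i| ^ p) ^ (q / p) := by
          refine sum_congr rfl fun i _ => ?_
          rw [← rpow_mul (abs_nonneg _), mul_div_cancel₀ _ hp.ne']
      _ ≤ (A / s) ^ (q / p - 1) * ∑ i, |(x - z) i| ^ p :=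
          sum_rpow_le_rpow_sub_one_mul_sum _ (fun i _ => by positivity)
            (fun i _ => (le_div_iff₀' hs').mpr (hxz i).2) ((one_le_div hp).mpr hpq.le)
      _ ≤ (A / s) ^ (q / p - 1) * A := by
          gcongr
          exact sum_le_sum fun i _ => rpow_le_rpow (abs_nonneg _) (hxz i).1 hp.le
  calc bestApprox s q x ≤ pnorm q (x - z) := bestApprox_le_pnorm_sub q x hz
    _ ≤ ((A / s) ^ (q / p - 1) * A) ^ (1 / q) := by
        unfold pnorm
        gcongr
    _ = (s : ℝ) ^ (-(1 / p - 1 / q)) * pnorm p x :=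
        div_rpow_sub_one_mul_self_rpow_one_div (by positivity) hs' hp hq
end

section
/- For 0 < p < q and any vector x ∈ R^N, σ_s(x)_q ≤ D_{p,q} s^{-(1/p-1/q)} ||x||_{p,∞}, where D_{p,q} = (q/p - 1)^{-1/q}. -/
/-- The weak-ℓp quasi-norm: `max_ℓ ℓ^{1/p} x*_ℓ` where `x*` is the
non-increasing rearrangement of the absolute values of `x`
(`Tuple.sort` sorts increasingly, so `ℓ.rev` picks the ℓ-th largest). -/
noncomputable def wnorm (p : ℝ) {N : ℕ} (x : Fin N → ℝ) : ℝ :=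
  ⨆ ℓ : Fin N, ((ℓ : ℝ) + 1) ^ (1 / p) * |x (Tuple.sort (fun i => |x i|) ℓ.rev)|

/-! Keep the `s` largest entries of `x`. What is left is the tail `∑_{k ≥ s} (x*_{k+1})^q`, and
the weak-`ℓ_p` bound `x*_{k+1} ≤ ‖x‖_{p,∞} (k+1)^{-1/p}` makes it at most
`‖x‖_{p,∞}^q ∑_{k ≥ s} (k+1)^{-q/p}`. Since `q/p > 1`, comparison with
`∫_s^∞ t^{-q/p} dt = s^{1-q/p}/(q/p - 1)` bounds this sum, and taking `q`-th roots gives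
the constant `(q/p - 1)^{-1/q} s^{-(1/p - 1/q)}`. -/

open Finset

lemma sum_Ico_rpow_neg_le {r : ℝ} (hr : 1 < r) {s : ℕ} (hs : 0 < s) (n : ℕ) :
    ∑ k ∈ Ico s n, ((k : ℝ) + 1) ^ (-r) ≤ (s : ℝ) ^ (1 - r) / (r - 1) := by
  have hs' : (0 : ℝ) < s := by exact_mod_cast hs
  rcases le_total s n with hsn | hns
  · have hanti : AntitoneOn (fun t : ℝ => t ^ (-r)) (Set.Icc s n) := fun a ha b _ hab =>
      Real.rpow_le_rpow_of_nonpos (hs'.trans_le ha.1) hab (by linarith)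
    have hzero : (0 : ℝ) ∉ Set.uIcc (s : ℝ) n := by
      rw [Set.uIcc_of_le (by exact_mod_cast hsn)]
      exact fun h => hs'.not_ge h.1
    calc ∑ k ∈ Ico s n, ((k : ℝ) + 1) ^ (-r)
        = ∑ k ∈ Ico s n, (fun t : ℝ => t ^ (-r)) ((k + 1 : ℕ) : ℝ) := by push_cast; rfl
      _ ≤ ∫ t in (s : ℝ)..n, t ^ (-r) := hanti.sum_le_integral_Ico hsn
      _ = ((s : ℝ) ^ (1 - r) - (n : ℝ) ^ (1 - r)) / (r - 1) := by
        rw [integral_rpow (Or.inr ⟨by linarith, hzero⟩), neg_add_eq_sub, ← neg_div_neg_eq, neg_sub,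
          neg_sub]
      _ ≤ (s : ℝ) ^ (1 - r) / (r - 1) :=
        div_le_div_of_nonneg_right (sub_le_self _ (by positivity)) (by linarith)
  · rw [Ico_eq_empty_of_le hns, sum_empty]
    exact div_nonneg (by positivity) (by linarith)

lemma sum_fin_filter_le_eq_sum_Ico {M : Type*} [AddCommMonoid M] (f : ℕ → M) (s n : ℕ) :
    ∑ k : Fin n with s ≤ k.val, f k = ∑ k ∈ Ico s n, f k := by
  rw [sum_filter, Fin.sum_univ_eq_sum_range (fun k => if s ≤ k then f k else 0), ← sum_filter]
  congr 1
  ext k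
  simp only [mem_filter, mem_range, mem_Ico]
  omega

lemma wnorm_nonneg (p : ℝ) {N : ℕ} (x : Fin N → ℝ) : 0 ≤ wnorm p x :=
  Real.iSup_nonneg fun _ => by positivity

lemma le_wnorm (p : ℝ) {N : ℕ} (x : Fin N → ℝ) (k : Fin N) :
    ((k : ℝ) + 1) ^ (1 / p) * |x (Tuple.sort (fun i => |x i|) k.rev)| ≤ wnorm p x :=
  le_ciSup (f := fun ℓ : Fin N => ((ℓ : ℝ) + 1) ^ (1 / p) * |x (Tuple.sort (fun i => |x i|) ℓ.rev)|)
    (Finite.bddAbove_range _) k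

lemma abs_sort_rev_le_wnorm_mul (p : ℝ) {N : ℕ} (x : Fin N → ℝ) (k : Fin N) :
    |x (Tuple.sort (fun i => |x i|) k.rev)| ≤ wnorm p x * ((k : ℝ) + 1) ^ (-(1 / p)) := by
  rw [Real.rpow_neg (by positivity), ← div_eq_mul_inv, le_div_iff₀ (by positivity), mul_comm]
  exact le_wnorm p x k

lemma abs_sort_rev_rpow_le {p q : ℝ} (hq : 0 ≤ q) {N : ℕ} (x : Fin N → ℝ) (k : Fin N) :
    |x (Tuple.sort (fun i => |x i|) k.rev)| ^ q ≤ wnorm p x ^ q * ((k : ℝ) + 1) ^ (-(q / p)) := by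
  calc |x (Tuple.sort (fun i => |x i|) k.rev)| ^ q
      ≤ (wnorm p x * ((k : ℝ) + 1) ^ (-(1 / p))) ^ q := by
        gcongr; exact abs_sort_rev_le_wnorm_mul p x k
    _ = wnorm p x ^ q * ((k : ℝ) + 1) ^ (-(q / p)) := by
        rw [Real.mul_rpow (wnorm_nonneg p x) (by positivity), ← Real.rpow_mul (by positivity)]
        ring_nf

lemma bestApprox_le_pnorm {s N : ℕ} {q : ℝ} {x z : Fin N → ℝ} (hz : IsSparse s z) :
    bestApprox s q x ≤ pnorm q (x - z) := by
  refine csInf_le ⟨0, ?_⟩ ⟨z, hz, rfl⟩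
  rintro _ ⟨z', -, rfl⟩
  exact Real.rpow_nonneg (by positivity) _

lemma bestApprox_le_tail {q : ℝ} (hq : q ≠ 0) (s : ℕ) {N : ℕ} (x : Fin N → ℝ)
    (τ : Equiv.Perm (Fin N)) :
    bestApprox s q x ≤ (∑ k : Fin N with s ≤ k.val, |x (τ k)| ^ q) ^ (1 / q) := by
  set S := ({k : Fin N | (k : ℕ) < s} : Finset (Fin N)).map τ.toEmbedding
  have hS : S.card ≤ s := by
    rw [card_map, Fin.card_filter_val_lt]
    exact min_le_right _ _
  refine (bestApprox_le_pnorm (z := fun i => if i ∈ S then x i else 0)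
    ⟨S, hS, fun i hi => if_neg hi⟩).trans_eq ?_
  unfold pnorm
  congr 1
  rw [sum_filter, ← Equiv.sum_comp τ]
  refine sum_congr rfl fun k _ => ?_
  by_cases hk : (k : ℕ) < s
  · simp [S, hk, Real.zero_rpow hq]
  · simp [S, hk]

lemma rpow_tail_bound_eq {M s p q : ℝ} (hM : 0 ≤ M) (hs : 0 < s) (hp : 0 < p) (hpq : p < q) :
    (M ^ q * (s ^ (1 - q / p) / (q / p - 1))) ^ (1 / q)
      = (q / p - 1) ^ (-(1 / q)) * s ^ (-(1 / p - 1 / q)) * M := by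
  have hq : 0 < q := hp.trans hpq
  have hr : 0 < q / p - 1 := by rw [sub_pos, one_lt_div hp]; exact hpq
  rw [div_eq_mul_inv, Real.mul_rpow (by positivity) (by positivity),
    Real.mul_rpow (by positivity) (by positivity), ← Real.rpow_mul hM, mul_one_div_cancel hq.ne',
    Real.rpow_one, ← Real.rpow_mul hs.le, Real.inv_rpow hr.le, ← Real.rpow_neg hr.le]
  have hexp : (1 - q / p) * (1 / q) = -(1 / p - 1 / q) := by field_simp; ring
  rw [hexp]
  ring

/-- For `0 < p < q`, `σ_s(x)_q ≤ D_{p,q} s^{-(1/p-1/q)} ‖x‖_{p,∞}` with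
`D_{p,q} = (q/p - 1)^{-1/q}`. -/
theorem bestApprox_le_wnorm {N : ℕ} (p q : ℝ) (hp : 0 < p) (hpq : p < q)
    (s : ℕ) (hs : 0 < s) (x : Fin N → ℝ) :
    bestApprox s q x ≤
      (q / p - 1) ^ (-(1 / q)) * (s : ℝ) ^ (-(1 / p - 1 / q)) * wnorm p x := by
  have hq : 0 < q := hp.trans hpq
  set σ := Tuple.sort (fun i => |x i|)
  have htail : ∑ k : Fin N with s ≤ k.val, |x (σ k.rev)| ^ q
      ≤ wnorm p x ^ q * ((s : ℝ) ^ (1 - q / p) / (q / p - 1)) := calc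
    _ ≤ ∑ k : Fin N with s ≤ k.val, wnorm p x ^ q * ((k : ℝ) + 1) ^ (-(q / p)) :=
        sum_le_sum fun k _ => abs_sort_rev_rpow_le hq.le x k
    _ = wnorm p x ^ q * ∑ k ∈ Ico s N, ((k : ℝ) + 1) ^ (-(q / p)) := by
        rw [sum_fin_filter_le_eq_sum_Ico (fun k => wnorm p x ^ q * ((k : ℝ) + 1) ^ (-(q / p))),
          mul_sum]
    _ ≤ _ := mul_le_mul_of_nonneg_left (sum_Ico_rpow_neg_le ((one_lt_div hp).mpr hpq) hs N)
        (Real.rpow_nonneg (wnorm_nonneg p x) q)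
  calc bestApprox s q x
      ≤ (∑ k : Fin N with s ≤ k.val, |x (σ k.rev)| ^ q) ^ (1 / q) :=
        bestApprox_le_tail hq.ne' s x (Fin.revPerm.trans σ)
    _ ≤ (wnorm p x ^ q * ((s : ℝ) ^ (1 - q / p) / (q / p - 1))) ^ (1 / q) :=
        Real.rpow_le_rpow (sum_nonneg fun _ _ => by positivity) htail (by positivity)
    _ = (q / p - 1) ^ (-(1 / q)) * (s : ℝ) ^ (-(1 / p - 1 / q)) * wnorm p x :=
        rpow_tail_bound_eq (wnorm_nonneg p x) (by exact_mod_cast hs) hp hpq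
end

section
/- Let 0 < p ≤ 1, m, s < N, and A ∈ R^{m×N}. Then every s-sparse vector x ∈ R^N is the unique minimizer of ||z||_p subject to Az = Ax if and only if A satisfies the p-null space property of order s: for every v ∈ ker A \ {0} and every S ⊂ [N] with |S| ≤ s, ||v_S||_p^p < (1/2) ||v||_p^p. -/
/-- `restrict S v` coincides with `v` on `S` and vanishes outside `S`. -/
def restrict {N : ℕ} (S : Finset (Fin N)) (v : Fin N → ℝ) : Fin N → ℝ :=
  fun i => if i ∈ S then v i else 0

lemma pnorm_pow {p : ℝ} (hp0 : 0 < p) {N : ℕ} (x : Fin N → ℝ) :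
    pnorm p x ^ p = ∑ i, |x i| ^ p := by
  have hnn : (0:ℝ) ≤ ∑ i, |x i| ^ p :=
    Finset.sum_nonneg fun i _ => Real.rpow_nonneg (abs_nonneg _) p
  rw [pnorm, ← Real.rpow_mul hnn, one_div_mul_cancel hp0.ne', Real.rpow_one]

lemma rpow_subadd {p : ℝ} (hp0 : 0 < p) (hp1 : p ≤ 1) {a b : ℝ}
    (ha : 0 ≤ a) (hb : 0 ≤ b) : (a + b) ^ p ≤ a ^ p + b ^ p := by
  have h := NNReal.rpow_add_le_add_rpow a.toNNReal b.toNNReal hp0.le hp1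
  have := NNReal.coe_le_coe.mpr h
  simpa [NNReal.coe_rpow, Real.coe_toNNReal _ ha, Real.coe_toNNReal _ hb,
    Real.coe_toNNReal _ (add_nonneg ha hb)] using this

/-- Every `s`-sparse vector `x` is the unique minimizer of `‖z‖_p` subject to
`Az = Ax` iff `A` satisfies the `p`-null space property of order `s`:
`‖v_S‖_p^p < (1/2) ‖v‖_p^p` for all `v ∈ ker A \ {0}` and `|S| ≤ s`. -/
theorem unique_lp_min_iff_nullSpaceProperty (p : ℝ) (hp0 : 0 < p) (hp1 : p ≤ 1)
    {N m s : ℕ} (hm : m < N) (hs : s < N) (A : Matrix (Fin m) (Fin N) ℝ) :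
    (∀ x : Fin N → ℝ, IsSparse s x →
        ∀ z : Fin N → ℝ, Matrix.mulVec A z = Matrix.mulVec A x → z ≠ x →
          pnorm p x < pnorm p z) ↔
      (∀ v : Fin N → ℝ, Matrix.mulVec A v = 0 → v ≠ 0 →
        ∀ S : Finset (Fin N), S.card ≤ s →
          pnorm p (restrict S v) ^ p < (1 / 2) * pnorm p v ^ p) := by
  have hrS : ∀ (S : Finset (Fin N)) (v : Fin N → ℝ),
      (∑ i, |restrict S v i| ^ p) = ∑ i ∈ S, |v i| ^ p := by
    intro S v
    calc (∑ i, |restrict S v i| ^ p)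
        = ∑ i, if i ∈ S then |v i| ^ p else 0 :=
          Finset.sum_congr rfl fun i _ => by
            by_cases hi : i ∈ S <;> simp [restrict, hi, Real.zero_rpow hp0.ne']
      _ = ∑ i ∈ S, |v i| ^ p := by rw [Finset.sum_ite_mem, Finset.univ_inter]
  have hsplit : ∀ (S : Finset (Fin N)) (v : Fin N → ℝ),
      (∑ i, |v i| ^ p) = (∑ i ∈ S, |v i| ^ p) + ∑ i ∈ Sᶜ, |v i| ^ p :=
    fun S v => (Finset.sum_add_sum_compl S _).symm
  constructor
  · intro h v hv hvne S hS
    set x : Fin N → ℝ := restrict S v with hx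
    set z : Fin N → ℝ := x - v with hz
    have hAz : Matrix.mulVec A z = Matrix.mulVec A x := by
      rw [hz, Matrix.mulVec_sub, hv, sub_zero]
    have hzx : z ≠ x := by
      intro hzeq
      apply hvne
      have : x - v = x := hzeq
      have := sub_eq_self.mp this
      exact this
    have hsp : IsSparse s x := ⟨S, hS, fun i hi => by simp [hx, restrict, hi]⟩
    have hlt := h x hsp z hAz hzx
    have hlt' : pnorm p x ^ p < pnorm p z ^ p :=
      Real.rpow_lt_rpow (Real.rpow_nonneg (Finset.sum_nonneg fun i _ =>
        Real.rpow_nonneg (abs_nonneg _) p) _) hlt hp0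
    rw [pnorm_pow hp0, pnorm_pow hp0] at hlt'
    have hxsum : (∑ i, |x i| ^ p) = ∑ i ∈ S, |v i| ^ p := hrS S v
    have hzsum : (∑ i, |z i| ^ p) = ∑ i ∈ Sᶜ, |v i| ^ p := by
      have : ∀ i, |z i| ^ p = |restrict Sᶜ v i| ^ p := by
        intro i
        by_cases hi : i ∈ S <;>
          simp [hz, hx, restrict, hi, abs_neg, Finset.mem_compl]
      rw [Finset.sum_congr rfl fun i _ => this i, hrS]
    rw [hxsum, hzsum] at hlt'
    rw [pnorm_pow hp0, pnorm_pow hp0, hrS, hsplit S v]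
    linarith
  · intro h x hxsp z hAz hzx
    obtain ⟨S, hScard, hSsupp⟩ := hxsp
    set v : Fin N → ℝ := x - z with hv
    have hAv : Matrix.mulVec A v = 0 := by
      rw [hv, Matrix.mulVec_sub, hAz, sub_self]
    have hvne : v ≠ 0 := sub_ne_zero.mpr (Ne.symm hzx)
    have hnsp := h v hAv hvne S hScard
    rw [pnorm_pow hp0, pnorm_pow hp0, hrS, hsplit S v] at hnsp
    have key : (∑ i ∈ S, |v i| ^ p) < ∑ i ∈ Sᶜ, |v i| ^ p := by linarith
    have hxle : (∑ i ∈ S, |x i| ^ p) ≤ (∑ i ∈ S, |v i| ^ p) + ∑ i ∈ S, |z i| ^ p := by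
      rw [← Finset.sum_add_distrib]
      refine Finset.sum_le_sum fun i _ => ?_
      have h1 : |x i| ≤ |v i| + |z i| := by
        have : x i = v i + z i := by simp [hv]
        rw [this]; exact abs_add_le _ _
      calc |x i| ^ p ≤ (|v i| + |z i|) ^ p :=
            Real.rpow_le_rpow (abs_nonneg _) h1 hp0.le
        _ ≤ |v i| ^ p + |z i| ^ p := rpow_subadd hp0 hp1 (abs_nonneg _) (abs_nonneg _)
    have hcompl : (∑ i ∈ Sᶜ, |v i| ^ p) = ∑ i ∈ Sᶜ, |z i| ^ p := by
      refine Finset.sum_congr rfl fun i hi => ?_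
      have hxi : x i = 0 := hSsupp i (Finset.mem_compl.mp hi)
      simp [hv, hxi, abs_neg]
    have hxsum : (∑ i, |x i| ^ p) = ∑ i ∈ S, |x i| ^ p := by
      rw [hsplit S x]
      have : (∑ i ∈ Sᶜ, |x i| ^ p) = 0 :=
        Finset.sum_eq_zero fun i hi => by
          rw [hSsupp i (Finset.mem_compl.mp hi)]
          simp [Real.zero_rpow hp0.ne']
      rw [this, add_zero]
    have hfinal : (∑ i, |x i| ^ p) < ∑ i, |z i| ^ p := by
      rw [hxsum, hsplit S z]
      calc (∑ i ∈ S, |x i| ^ p)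
          ≤ (∑ i ∈ S, |v i| ^ p) + ∑ i ∈ S, |z i| ^ p := hxle
        _ < (∑ i ∈ Sᶜ, |v i| ^ p) + ∑ i ∈ S, |z i| ^ p := by linarith
        _ = (∑ i ∈ S, |z i| ^ p) + ∑ i ∈ Sᶜ, |z i| ^ p := by rw [hcompl]; ring
    exact Real.rpow_lt_rpow (Finset.sum_nonneg fun i _ =>
      Real.rpow_nonneg (abs_nonneg _) p) hfinal (by positivity)
end

section
/- For natural numbers s < N, there exists a family U of subsets of {1,...,N} such that every set in U has exactly s elements, any two distinct sets I, J ∈ U satisfy |I ∩ J| < s/2, and |U| ≥ (N/(4s))^{s/2}. -/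
/-!
Take a family `U` of `s`-sets which is maximal subject to pairwise intersections of size `< k`,
where `k = ⌈s/2⌉`. By maximality every `s`-set meets some member of `U` in at least `k` points, and
an `s`-set `I` meets at most `C(s,k) C(N-k,s-k)` of the `s`-sets in `k` or more points, so
`C(N,s) ≤ |U| C(s,k) C(N-k,s-k)`. Since `C(N,s) C(s,k) = C(N,k) C(N-k,s-k)`, this says
`C(N,k) ≤ |U| C(s,k)²`, and `N^k C(s,k) ≤ s^k C(N,k)` together with `C(s,k) ≤ 2^s ≤ 4^k` give
`N^k ≤ (4s)^k |U|`.
-/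

open Finset

namespace Finset

variable {α : Type*}

theorem exists_subset_pairwise_forall_exists_not (r : α → α → Prop) [Std.Symm r]
    (A : Finset α) :
    ∃ U ⊆ A, (U : Set α).Pairwise r ∧ ∀ a ∈ A, a ∉ U → ∃ u ∈ U, ¬ r a u := by
  classical
  obtain ⟨U, hUmem, hUmax⟩ :=
    (A.powerset.filter fun U : Finset α => (U : Set α).Pairwise r).exists_maximal ⟨∅, by simp⟩
  rw [mem_filter, mem_powerset] at hUmem
  refine ⟨U, hUmem.1, hUmem.2, fun a ha haU => ?_⟩
  by_contra! hfar
  have hinsert : insert a U ∈ A.powerset.filter fun U : Finset α => (U : Set α).Pairwise r := by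
    rw [mem_filter, mem_powerset, coe_insert, Set.pairwise_insert_of_symm_of_notMem haU]
    exact ⟨insert_subset ha hUmem.1, hUmem.2, hfar⟩
  exact haU (hUmax hinsert (subset_insert a U) (mem_insert_self a U))

variable [Fintype α] [DecidableEq α]

theorem card_powersetCard_filter_le_card_inter_le {s : ℕ} {I : Finset α} (hI : #I = s) (k : ℕ) :
    #{J ∈ powersetCard s (univ : Finset α) | k ≤ #(I ∩ J)} ≤
      s.choose k * (Fintype.card α - k).choose (s - k) := by
  have hcover : {J ∈ powersetCard s (univ : Finset α) | k ≤ #(I ∩ J)} ⊆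
      (I.powersetCard k).biUnion fun T => {J ∈ powersetCard s univ | T ⊆ J} := by
    intro J hJ
    rw [mem_filter] at hJ
    obtain ⟨T, hTIJ, hT⟩ := exists_subset_card_eq hJ.2
    exact mem_biUnion.2 ⟨T, mem_powersetCard.2 ⟨hTIJ.trans inter_subset_left, hT⟩,
      mem_filter.2 ⟨hJ.1, hTIJ.trans inter_subset_right⟩⟩
  have hball : ∀ T ∈ I.powersetCard k,
      #{J ∈ powersetCard s univ | T ⊆ J} = (Fintype.card α - k).choose (s - k) := by
    intro T hT
    obtain ⟨hTI, hT⟩ := mem_powersetCard.1 hT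
    rw [card_filter_powersetCard_subset T univ s (subset_univ T) (hI ▸ card_le_card hTI),
      card_univ, hT]
  calc _ ≤ _ := card_le_card hcover
    _ ≤ #(I.powersetCard k) * (Fintype.card α - k).choose (s - k) :=
      card_biUnion_le_card_mul _ _ _ fun T hT => (hball T hT).le
    _ = _ := by rw [card_powersetCard, hI]

theorem exists_sized_family_card_inter_lt {s k : ℕ} (hks : k ≤ s) :
    ∃ U : Finset (Finset α), (∀ I ∈ U, #I = s) ∧
      (∀ I ∈ U, ∀ J ∈ U, I ≠ J → #(I ∩ J) < k) ∧
      (Fintype.card α).choose s ≤ #U * (s.choose k * (Fintype.card α - k).choose (s - k)) := by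
  have : Std.Symm fun I J : Finset α => #(I ∩ J) < k := ⟨fun I J => by rw [inter_comm]; exact id⟩
  obtain ⟨U, hUA, hUsep, hUmax⟩ := exists_subset_pairwise_forall_exists_not
    (fun I J : Finset α => #(I ∩ J) < k) (powersetCard s univ)
  have hUcard : ∀ I ∈ U, #I = s := fun I hI => (mem_powersetCard.1 (hUA hI)).2
  have hcover : powersetCard s univ ⊆
      U.biUnion fun I => {J ∈ powersetCard s univ | k ≤ #(I ∩ J)} := by
    intro J hJ
    by_cases hJU : J ∈ U
    · exact mem_biUnion.2 ⟨J, hJU, mem_filter.2 ⟨hJ, by rw [inter_self, hUcard J hJU]; exact hks⟩⟩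
    · obtain ⟨I, hI, hIJ⟩ := hUmax J hJ hJU
      exact mem_biUnion.2 ⟨I, hI, mem_filter.2 ⟨hJ, by rw [inter_comm]; omega⟩⟩
  refine ⟨U, hUcard, fun I hI J hJ hIJ => hUsep hI hJ hIJ, ?_⟩
  rw [← card_univ, ← card_powersetCard]
  exact (card_le_card hcover).trans <| card_biUnion_le_card_mul _ _ _ fun I hI =>
    card_powersetCard_filter_le_card_inter_le (hUcard I hI) k

end Finset

namespace Nat

theorem pow_mul_descFactorial_le {n s : ℕ} (hsn : s ≤ n) (k : ℕ) :
    n ^ k * s.descFactorial k ≤ s ^ k * n.descFactorial k := by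
  induction k with
  | zero => simp
  | succ k ih =>
    have hstep : n * (s - k) ≤ s * (n - k) := by
      rw [Nat.mul_sub, Nat.mul_sub, Nat.mul_comm n s]
      exact Nat.sub_le_sub_left (Nat.mul_le_mul_right k hsn) _
    calc n ^ (k + 1) * s.descFactorial (k + 1)
        = n * (s - k) * (n ^ k * s.descFactorial k) := by rw [descFactorial_succ]; ring
      _ ≤ s * (n - k) * (s ^ k * n.descFactorial k) := Nat.mul_le_mul hstep ih
      _ = s ^ (k + 1) * n.descFactorial (k + 1) := by rw [descFactorial_succ]; ring

theorem pow_mul_choose_le {n s : ℕ} (hsn : s ≤ n) (k : ℕ) :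
    n ^ k * s.choose k ≤ s ^ k * n.choose k := by
  refine Nat.le_of_mul_le_mul_left ?_ (factorial_pos k)
  calc k ! * (n ^ k * s.choose k) = n ^ k * s.descFactorial k := by
        rw [descFactorial_eq_factorial_mul_choose]; ring
    _ ≤ s ^ k * n.descFactorial k := pow_mul_descFactorial_le hsn k
    _ = k ! * (s ^ k * n.choose k) := by rw [descFactorial_eq_factorial_mul_choose]; ring

theorem pow_le_four_mul_pow_mul_of_choose_le {n s k u : ℕ} (hks : k ≤ s) (hsk : s ≤ 2 * k)
    (hsn : s ≤ n) (h : n.choose s ≤ u * (s.choose k * (n - k).choose (s - k))) :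
    n ^ k ≤ (4 * s) ^ k * u := by
  have hnk : n.choose k ≤ u * s.choose k ^ 2 := by
    refine Nat.le_of_mul_le_mul_right ?_ (choose_pos (Nat.sub_le_sub_right hsn k))
    calc n.choose k * (n - k).choose (s - k) = n.choose s * s.choose k := (choose_mul hks).symm
      _ ≤ u * (s.choose k * (n - k).choose (s - k)) * s.choose k := Nat.mul_le_mul_right _ h
      _ = u * s.choose k ^ 2 * (n - k).choose (s - k) := by ring
  have hsk4 : s.choose k ≤ 4 ^ k :=
    calc s.choose k ≤ 2 ^ s := choose_le_two_pow s k
      _ ≤ 2 ^ (2 * k) := Nat.pow_le_pow_right two_pos hsk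
      _ = 4 ^ k := by rw [pow_mul]; norm_num
  refine Nat.le_of_mul_le_mul_right ?_ (pow_pos (choose_pos hks) 2)
  calc n ^ k * s.choose k ^ 2 = n ^ k * s.choose k * s.choose k := by ring
    _ ≤ s ^ k * n.choose k * 4 ^ k := Nat.mul_le_mul (pow_mul_choose_le hsn k) hsk4
    _ ≤ s ^ k * (u * s.choose k ^ 2) * 4 ^ k := by gcongr
    _ = (4 * s) ^ k * u * s.choose k ^ 2 := by ring

end Nat

theorem Real.div_rpow_le_of_pow_le_pow_mul {a b c t : ℝ} {k : ℕ} (ha : 0 ≤ a) (hb : 0 ≤ b)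
    (hc : 1 ≤ c) (ht : 0 ≤ t) (htk : t ≤ k) (h : a ^ k ≤ b ^ k * c) : (a / b) ^ t ≤ c := by
  rcases le_or_gt (a / b) 1 with hab | hab
  · exact (Real.rpow_le_one (div_nonneg ha hb) hab ht).trans hc
  rcases hb.eq_or_lt with rfl | hb
  · norm_num at hab
  calc (a / b) ^ t ≤ (a / b) ^ (k : ℝ) := Real.rpow_le_rpow_of_exponent_le hab.le htk
    _ = (a / b) ^ k := Real.rpow_natCast _ k
    _ ≤ c := by rw [div_pow, div_le_iff₀ (by positivity)]; linarith

/-- There is a large family of `s`-element subsets of `{1,…,N}` with pairwise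
intersections of size `< s/2`, of cardinality at least `(N/(4s))^{s/2}`. -/
theorem exists_separated_family {N s : ℕ} (hs : s < N) :
    ∃ U : Finset (Finset (Fin N)),
      (∀ I ∈ U, I.card = s) ∧
      (∀ I ∈ U, ∀ J ∈ U, I ≠ J → ((I ∩ J).card : ℝ) < s / 2) ∧
      ((N : ℝ) / (4 * s)) ^ ((s : ℝ) / 2) ≤ (U.card : ℝ) := by
  obtain ⟨U, hUcard, hUsep, hUbound⟩ :=
    exists_sized_family_card_inter_lt (α := Fin N) (s := s) (k := (s + 1) / 2) (by omega)
  rw [Fintype.card_fin] at hUbound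
  have hUpos : 1 ≤ #U :=
    Nat.pos_of_ne_zero fun hU => (Nat.choose_pos hs.le).ne' (by simpa [hU] using hUbound)
  refine ⟨U, hUcard, fun I hI J hJ hIJ => ?_, ?_⟩
  · have := hUsep I hI J hJ hIJ
    rw [lt_div_iff₀ two_pos]
    exact_mod_cast (by omega : #(I ∩ J) * 2 < s)
  · refine Real.div_rpow_le_of_pow_le_pow_mul (k := (s + 1) / 2) (by positivity) (by positivity)
      (by exact_mod_cast hUpos) (by positivity) ?_ ?_
    · rw [div_le_iff₀ two_pos]
      exact_mod_cast (by omega : s ≤ (s + 1) / 2 * 2)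
    · exact_mod_cast Nat.pow_le_four_mul_pow_mul_of_choose_le (by omega) (by omega) hs.le hUbound
end

section
/- Let s ≤ N/2. The number of s-element subsets J of {1,...,N} such that |I ∩ J| ≥ s/2 for a fixed s-element set I is at most 2^s · C(N-s, ⌊s/2⌋), where C denotes the binomial coefficient. -/
/-!
Sort the sets `J` by their trace `A = I ∩ J`. There are at most `2^s` traces, and `J` is
recovered from its trace and from `J \ I`, an `(s - |A|)`-subset of the `(N - s)`-element
complement of `I`. Since `s - |A| ≤ s/2 ≤ (N - s)/2` and binomial coefficients increase up to the
middle, each trace carries at most `C(N - s, ⌊s/2⌋)` sets.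
-/

open Finset

theorem Nat.choose_le_choose_of_le_of_le_half {n a b : ℕ} (hab : a ≤ b) (hb : b ≤ n / 2) :
    n.choose a ≤ n.choose b := by
  induction b, hab using Nat.le_induction with
  | base => rfl
  | succ k _ ih => exact (ih (by omega)).trans (Nat.choose_le_succ_of_lt_half_left (by omega))

namespace Finset

variable {α : Type*} [DecidableEq α]

theorem card_powersetCard_filter_inter_eq_le (U I A : Finset α) (k : ℕ) :
    #{J ∈ U.powersetCard k | I ∩ J = A} ≤ (#(U \ I)).choose (k - #A) := by
  rw [← card_powersetCard]
  refine card_le_card_of_injOn (· \ I) (fun J hJ ↦ ?_) (fun J₁ hJ₁ J₂ hJ₂ h ↦ ?_)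
  · obtain ⟨hJ, hIJ⟩ := mem_filter.1 hJ
    obtain ⟨hJU, hJk⟩ := mem_powersetCard.1 hJ
    exact mem_powersetCard.2 ⟨sdiff_subset_sdiff hJU le_rfl, by rw [card_sdiff, hIJ, hJk]⟩
  · have h₁ := (mem_filter.1 hJ₁).2
    have h₂ := (mem_filter.1 hJ₂).2
    rw [← sdiff_union_inter J₁ I, ← sdiff_union_inter J₂ I, inter_comm J₁, inter_comm J₂, h₁, h₂]
    exact congrArg (· ∪ A) h

theorem card_powersetCard_filter_le_two_mul_card_inter_le {U I : Finset α} (hIU : I ⊆ U)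
    (hU : 2 * #I ≤ #U) :
    #{J ∈ U.powersetCard #I | #I ≤ 2 * #(I ∩ J)} ≤ 2 ^ #I * (#U - #I).choose (#I / 2) := by
  rw [mul_comm, ← card_powerset]
  refine card_le_mul_card_image_of_maps_to (f := (I ∩ ·))
    (fun J _ ↦ mem_powerset.2 inter_subset_left) _ (fun A _ ↦ ?_)
  rw [filter_filter]
  by_cases hA : #I ≤ 2 * #A
  · calc #{J ∈ U.powersetCard #I | #I ≤ 2 * #(I ∩ J) ∧ I ∩ J = A}
        ≤ #{J ∈ U.powersetCard #I | I ∩ J = A} :=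
          card_le_card (monotone_filter_right _ fun _ _ ↦ And.right)
      _ ≤ (#(U \ I)).choose (#I - #A) := card_powersetCard_filter_inter_eq_le U I A #I
      _ ≤ (#U - #I).choose (#I / 2) := by
        rw [card_sdiff_of_subset hIU]
        exact Nat.choose_le_choose_of_le_of_le_half (by omega) (by omega)
  · rw [filter_false_of_mem fun J _ ⟨hJ, hJA⟩ ↦ hA (hJA ▸ hJ), card_empty]
    exact Nat.zero_le _

end Finset

open scoped Classical in
/-- For `s ≤ N/2`, the number of `s`-element subsets `J` of `{1,…,N}` with
`|I ∩ J| ≥ s/2`, for a fixed `s`-element set `I`, is at most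
`2^s · C(N-s, ⌊s/2⌋)`. -/
theorem card_large_intersection_le {N s : ℕ} (hs : 2 * s ≤ N)
    (I : Finset (Fin N)) (hI : I.card = s) :
    ((((Finset.univ : Finset (Fin N)).powersetCard s).filter
        (fun J => (s : ℝ) / 2 ≤ ((I ∩ J).card : ℝ))).card : ℝ) ≤
      2 ^ s * ((N - s).choose (s / 2) : ℝ) := by
  subst hI
  have half_le_iff (J : Finset (Fin N)) : (#I : ℝ) / 2 ≤ #(I ∩ J) ↔ #I ≤ 2 * #(I ∩ J) := by
    rw [div_le_iff₀ two_pos, mul_comm]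
    exact_mod_cast Iff.rfl
  simp_rw [half_le_iff]
  have := card_powersetCard_filter_le_two_mul_card_inter_le (subset_univ I) (by rwa [card_fin])
  rw [card_fin] at this
  exact_mod_cast this
end

section
/- For integers 1 ≤ s ≤ N/4, the ratio C(N,s) / (2^s C(N-s, ⌊s/2⌋)) is at least (N/(4s))^{s/2}. -/
/-!
Put `k = ⌊s/2⌋` and `m = s - k = ⌈s/2⌉`. Counting pairs `(T, U)` with `U ⊆ T`, `|T| = s`, `|U| = m`
in two ways gives `C(N,s) C(s,m) = C(N,m) C(N-m,k)`, and `C(N,m) / C(s,m) ≥ (N/s)^m` because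
`C(n,m) / n^m = ∏_{i<m} (1 - i/n) / m!` increases with `n`. Hence `C(N,s) / C(N-s,k) ≥ (N/s)^m`,
and since `2^s ≤ 4^m` and `N/(4s) ≥ 1`, `(N/(4s))^{s/2} ≤ (N/(4s))^m ≤ (N/s)^m / 2^s`.
-/

namespace Nat

lemma mul_sub_le_mul_sub {s N : ℕ} (h : s ≤ N) (i : ℕ) : N * (s - i) ≤ s * (N - i) := by
  rw [Nat.mul_sub, Nat.mul_sub, mul_comm s N]
  exact Nat.sub_le_sub_left (Nat.mul_le_mul_right i h) _

lemma pow_mul_descFactorial_le_s6 {s N : ℕ} (h : s ≤ N) (m : ℕ) :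
    N ^ m * s.descFactorial m ≤ s ^ m * N.descFactorial m := by
  induction m with
  | zero => simp
  | succ m ih =>
    calc N ^ (m + 1) * s.descFactorial (m + 1)
        = (N * (s - m)) * (N ^ m * s.descFactorial m) := by rw [descFactorial_succ]; ring
      _ ≤ (s * (N - m)) * (s ^ m * N.descFactorial m) :=
          Nat.mul_le_mul (mul_sub_le_mul_sub h m) ih
      _ = s ^ (m + 1) * N.descFactorial (m + 1) := by rw [descFactorial_succ]; ring

lemma pow_mul_choose_le_s6 {s N : ℕ} (h : s ≤ N) (m : ℕ) :
    N ^ m * s.choose m ≤ s ^ m * N.choose m := by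
  have hdesc := pow_mul_descFactorial_le_s6 h m
  rw [descFactorial_eq_factorial_mul_choose, descFactorial_eq_factorial_mul_choose,
    mul_left_comm, mul_left_comm (s ^ m)] at hdesc
  exact Nat.le_of_mul_le_mul_left hdesc (factorial_pos m)

lemma pow_mul_choose_sub_le {m s N : ℕ} (hms : m ≤ s) (hsN : s ≤ N) :
    N ^ m * (N - s).choose (s - m) ≤ N.choose s * s ^ m := by
  refine Nat.le_of_mul_le_mul_right ?_ (choose_pos hms)
  calc N ^ m * (N - s).choose (s - m) * s.choose m
      = N ^ m * s.choose m * (N - s).choose (s - m) := by ring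
    _ ≤ s ^ m * N.choose m * (N - m).choose (s - m) :=
        Nat.mul_le_mul (pow_mul_choose_le_s6 hsN m) (choose_le_choose _ (by omega))
    _ = N.choose s * s ^ m * s.choose m := by rw [mul_assoc, ← choose_mul hms]; ring

end Nat

lemma two_pow_mul_pow_le {s m : ℕ} (h : s ≤ 2 * m) {x : ℝ} (hx : 0 ≤ x) :
    2 ^ s * x ^ m ≤ (4 * x) ^ m := by
  rw [mul_pow, show (4 : ℝ) ^ m = 2 ^ (2 * m) by rw [pow_mul]; norm_num]
  gcongr
  norm_num

/-- For `1 ≤ s ≤ N/4`, the ratio `C(N,s) / (2^s C(N-s, ⌊s/2⌋))` is at least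
`(N/(4s))^{s/2}`. -/
theorem choose_ratio_ge {N s : ℕ} (hs1 : 1 ≤ s) (hs : 4 * s ≤ N) :
    ((N : ℝ) / (4 * s)) ^ ((s : ℝ) / 2) ≤
      (N.choose s : ℝ) / (2 ^ s * ((N - s).choose (s / 2) : ℝ)) := by
  set m := s - s / 2
  have hs0 : (0 : ℝ) < s := by exact_mod_cast hs1
  have hbase : 1 ≤ (N : ℝ) / (4 * s) := by
    rw [le_div_iff₀ (by positivity), one_mul]
    exact_mod_cast hs
  have hexp : (s : ℝ) / 2 ≤ m := by
    rw [div_le_iff₀ two_pos]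
    exact_mod_cast (show s ≤ m * 2 by omega)
  have hchoose : (0 : ℝ) < (N - s).choose (s / 2) := by
    exact_mod_cast Nat.choose_pos (by omega)
  have hkey : (N : ℝ) ^ m * (N - s).choose (s / 2) ≤ N.choose s * (s : ℝ) ^ m := by
    have h := Nat.pow_mul_choose_sub_le (m := m) (by omega) (by omega : s ≤ N)
    rw [show s - m = s / 2 by omega] at h
    exact_mod_cast h
  calc ((N : ℝ) / (4 * s)) ^ ((s : ℝ) / 2)
      ≤ ((N : ℝ) / (4 * s)) ^ (m : ℝ) := Real.rpow_le_rpow_of_exponent_le hbase hexp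
    _ = (N : ℝ) ^ m / (4 * s) ^ m := by rw [Real.rpow_natCast, div_pow]
    _ ≤ (N : ℝ) ^ m / (2 ^ s * (s : ℝ) ^ m) :=
        div_le_div_of_nonneg_left (by positivity) (by positivity)
          (two_pow_mul_pow_le (by omega) hs0.le)
    _ ≤ (N.choose s : ℝ) / (2 ^ s * ((N - s).choose (s / 2) : ℝ)) := by
        rw [div_le_div_iff₀ (by positivity) (by positivity)]
        linarith [mul_le_mul_of_nonneg_left hkey (pow_nonneg zero_le_two (M₀ := ℝ) s)]
end

section
/- For 0 < p ≤ 1, p < q ≤ ∞, and m < N, the Gelfand width satisfies d^m(B_p^N, ℓ_q^N) ≥ (1/(m+1))^{1/p - 1/q}. -/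
/-- The ℓq (quasi-)norm on ℝ^N, allowing `q = ∞`. -/
noncomputable def lpnorm (q : ENNReal) {N : ℕ} (x : Fin N → ℝ) : ℝ :=
  if q = ⊤ then ⨆ i, |x i| else (∑ i, |x i| ^ q.toReal) ^ (1 / q.toReal)

/-- The Gelfand width `d^m(K, X) = inf_A sup {‖v‖_X : v ∈ K ∩ ker A}`. -/
noncomputable def gelfandWidth (m : ℕ) {N : ℕ} (K : Set (Fin N → ℝ))
    (nrm : (Fin N → ℝ) → ℝ) : ℝ :=
  ⨅ A : Matrix (Fin m) (Fin N) ℝ,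
    sSup (nrm '' {v | v ∈ K ∧ Matrix.mulVec A v = 0})

open Finset Matrix

theorem Matrix.exists_ne_zero_mulVec_eq_zero_of_card_lt {K κ ι : Type*} [Field K] [Fintype κ]
    [Fintype ι] (A : Matrix κ ι K) (s : Finset ι) (hs : Fintype.card κ < #s) :
    ∃ v ≠ 0, A *ᵥ v = 0 ∧ ∀ i ∉ s, v i = 0 := by
  let extend := Function.ExtendByZero.linearMap K ((↑) : s → ι)
  have hker : LinearMap.ker (A.mulVecLin ∘ₗ extend) ≠ ⊥ :=
    LinearMap.ker_ne_bot_of_finrank_lt (by simpa using hs)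
  obtain ⟨y, hy, hy0⟩ := (Submodule.ne_bot_iff _).1 hker
  obtain ⟨j, hj⟩ := Function.ne_iff.1 hy0
  refine ⟨extend y, Function.ne_iff.2 ⟨j, ?_⟩, hy, fun i hi => ?_⟩
  · simpa [extend, Subtype.val_injective.extend_apply] using hj
  · simp only [extend, Function.ExtendByZero.linearMap_apply]
    exact Function.extend_apply' _ _ _ fun ⟨a, ha⟩ => hi (ha ▸ a.2)

section Comparison

variable {ι : Type*} (s : Finset ι) (f : ι → ℝ) {p r : ℝ}

theorem sum_abs_rpow_rpow_le_card_rpow_mul_of_abs_le (hp : 0 < p) {M : ℝ} (hM : 0 ≤ M)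
    (hf : ∀ i ∈ s, |f i| ≤ M) :
    (∑ i ∈ s, |f i| ^ p) ^ (1 / p) ≤ (#s : ℝ) ^ (1 / p) * M := by
  have hsum : ∑ i ∈ s, |f i| ^ p ≤ #s * M ^ p := by
    simpa using sum_le_card_nsmul s _ _ fun i hi =>
      Real.rpow_le_rpow (abs_nonneg _) (hf i hi) hp.le
  calc (∑ i ∈ s, |f i| ^ p) ^ (1 / p)
      ≤ (#s * M ^ p) ^ (1 / p) := Real.rpow_le_rpow (by positivity) hsum (by positivity)
    _ = (#s : ℝ) ^ (1 / p) * M := by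
      rw [Real.mul_rpow (by positivity) (by positivity), one_div, Real.rpow_rpow_inv hM hp.ne']

theorem sum_abs_rpow_rpow_le_card_rpow_mul (hp : 0 < p) (hpr : p ≤ r) :
    (∑ i ∈ s, |f i| ^ p) ^ (1 / p) ≤
      (#s : ℝ) ^ (1 / p - 1 / r) * (∑ i ∈ s, |f i| ^ r) ^ (1 / r) := by
  have hr : 0 < r := hp.trans_le hpr
  have hpow : ∀ i, (|f i| ^ p) ^ (r / p) = |f i| ^ r := fun i => by
    rw [← Real.rpow_mul (abs_nonneg _), mul_div_cancel₀ r hp.ne']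
  have hmean : (∑ i ∈ s, |f i| ^ p) ^ (r / p) ≤ (#s : ℝ) ^ (r / p - 1) * ∑ i ∈ s, |f i| ^ r := by
    simpa only [hpow] using Real.rpow_sum_le_const_mul_sum_rpow_of_nonneg s
      ((one_le_div hp).2 hpr) fun i _ => Real.rpow_nonneg (abs_nonneg (f i)) p
  calc (∑ i ∈ s, |f i| ^ p) ^ (1 / p)
      = ((∑ i ∈ s, |f i| ^ p) ^ (r / p)) ^ (1 / r) := by
        rw [← Real.rpow_mul (by positivity)]; field_simp
    _ ≤ ((#s : ℝ) ^ (r / p - 1) * ∑ i ∈ s, |f i| ^ r) ^ (1 / r) :=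
        Real.rpow_le_rpow (by positivity) hmean (by positivity)
    _ = (#s : ℝ) ^ (1 / p - 1 / r) * (∑ i ∈ s, |f i| ^ r) ^ (1 / r) := by
        rw [Real.mul_rpow (by positivity) (by positivity), ← Real.rpow_mul (by positivity)]
        congr 2; field_simp

end Comparison

section Quasinorms

variable {N : ℕ} {p : ℝ}

theorem abs_le_pnorm (hp : 0 < p) (x : Fin N → ℝ) (i : Fin N) : |x i| ≤ pnorm p x := by
  calc |x i| = (|x i| ^ p) ^ (1 / p) := by rw [one_div, Real.rpow_rpow_inv (abs_nonneg _) hp.ne']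
    _ ≤ pnorm p x :=
      Real.rpow_le_rpow (by positivity)
        (single_le_sum (fun j _ => Real.rpow_nonneg (abs_nonneg (x j)) p) (mem_univ i))
        (by positivity)

theorem pnorm_pos (hp : 0 < p) {x : Fin N → ℝ} (hx : x ≠ 0) : 0 < pnorm p x := by
  obtain ⟨i, hi⟩ := Function.ne_iff.1 hx
  exact (abs_pos.2 hi).trans_le (abs_le_pnorm hp x i)

theorem pnorm_smul (hp : 0 < p) (c : ℝ) (x : Fin N → ℝ) : pnorm p (c • x) = |c| * pnorm p x := by
  simp only [pnorm, Pi.smul_apply, smul_eq_mul, abs_mul,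
    Real.mul_rpow (abs_nonneg c) (abs_nonneg _), ← mul_sum]
  rw [Real.mul_rpow (by positivity) (by positivity), one_div,
    Real.rpow_rpow_inv (abs_nonneg c) hp.ne']

theorem bddAbove_lpnorm_image_pnorm_le_one (hp : 0 < p) (q : ENNReal) :
    BddAbove (lpnorm q '' {x : Fin N → ℝ | pnorm p x ≤ 1}) := by
  refine ⟨max 1 ((N : ℝ) ^ (1 / q.toReal)), ?_⟩
  rintro _ ⟨x, hx, rfl⟩
  have hx1 : ∀ i, |x i| ≤ 1 := fun i => (abs_le_pnorm hp x i).trans hx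
  unfold lpnorm
  split_ifs
  · exact le_max_of_le_left (Real.iSup_le hx1 zero_le_one)
  · refine le_max_of_le_right (Real.rpow_le_rpow (by positivity) ?_ (by positivity))
    simpa using sum_le_card_nsmul univ _ _ fun i _ =>
      Real.rpow_le_one (abs_nonneg _) (hx1 i) ENNReal.toReal_nonneg

theorem pnorm_le_card_rpow_mul_lpnorm (hp : 0 < p) {q : ENNReal} (hpq : ENNReal.ofReal p ≤ q)
    {s : Finset (Fin N)} {x : Fin N → ℝ} (hx : ∀ i ∉ s, x i = 0) :
    pnorm p x ≤ (#s : ℝ) ^ (1 / p - q⁻¹.toReal) * lpnorm q x := by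
  have hsum : ∀ t : ℝ, 0 < t → ∑ i, |x i| ^ t = ∑ i ∈ s, |x i| ^ t := fun t ht =>
    (sum_subset (subset_univ s) fun i _ hi => by simp [hx i hi, Real.zero_rpow ht.ne']).symm
  unfold pnorm lpnorm
  rw [hsum p hp]
  split_ifs with hq
  · subst hq
    simpa using sum_abs_rpow_rpow_le_card_rpow_mul_of_abs_le s x hp
      (Real.iSup_nonneg fun i => abs_nonneg (x i))
      fun i _ => le_ciSup (f := fun i => |x i|) (Set.finite_range _).bddAbove i
  · have hpr : p ≤ q.toReal := (ENNReal.ofReal_le_iff_le_toReal hq).1 hpq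
    rw [hsum _ (hp.trans_le hpr), ENNReal.toReal_inv, ← one_div]
    exact sum_abs_rpow_rpow_le_card_rpow_mul s x hp hpr

end Quasinorms

theorem gelfandWidth_simple_lower_bound_general (p : ℝ) (hp0 : 0 < p)
    (q : ENNReal) (hq : ENNReal.ofReal p < q) (N m : ℕ) (hm : m < N) :
    (1 / ((m : ℝ) + 1)) ^ (1 / p - (q⁻¹).toReal) ≤
      gelfandWidth m {x : Fin N → ℝ | pnorm p x ≤ 1} (lpnorm q) := by
  refine le_ciInf fun A => ?_
  let s := Iic (⟨m, hm⟩ : Fin N)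
  obtain ⟨v, hv0, hAv, hvs⟩ :=
    A.exists_ne_zero_mulVec_eq_zero_of_card_lt s (by simp [s, Fin.card_Iic])
  let w := (pnorm p v)⁻¹ • v
  have hw : pnorm p w = 1 := by
    have := pnorm_pos hp0 hv0
    rw [pnorm_smul hp0, abs_of_pos (inv_pos.2 this), inv_mul_cancel₀ this.ne']
  have hws : ∀ i ∉ s, w i = 0 := fun i hi => by simp [w, hvs i hi]
  have hcomp := pnorm_le_card_rpow_mul_lpnorm hp0 hq.le hws
  rw [hw, show (#s : ℝ) = m + 1 by simp [s, Fin.card_Iic]] at hcomp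
  calc (1 / ((m : ℝ) + 1)) ^ (1 / p - (q⁻¹).toReal)
      = 1 / ((m : ℝ) + 1) ^ (1 / p - (q⁻¹).toReal) := by
        rw [Real.div_rpow zero_le_one (by positivity), Real.one_rpow]
    _ ≤ lpnorm q w := (div_le_iff₀' (by positivity)).2 hcomp
    _ ≤ sSup (lpnorm q '' {v | v ∈ {x | pnorm p x ≤ 1} ∧ A *ᵥ v = 0}) :=
        le_csSup ((bddAbove_lpnorm_image_pnorm_le_one hp0 q).mono (Set.image_mono fun _ h => h.1))
          ⟨w, ⟨hw.le, by simp [w, Matrix.mulVec_smul, hAv]⟩, rfl⟩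

/-- For `0 < p ≤ 1`, `p < q ≤ ∞`, and `m < N`:
`d^m(B_p^N, ℓ_q^N) ≥ (1/(m+1))^{1/p - 1/q}`. -/
theorem gelfandWidth_simple_lower_bound (p : ℝ) (hp0 : 0 < p) (hp1 : p ≤ 1)
    (q : ENNReal) (hq : ENNReal.ofReal p < q) (N m : ℕ) (hm : m < N) :
    (1 / ((m : ℝ) + 1)) ^ (1 / p - (q⁻¹).toReal) ≤
      gelfandWidth m {x : Fin N → ℝ | pnorm p x ≤ 1} (lpnorm q) :=
  gelfandWidth_simple_lower_bound_general p hp0 q hq N m hm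
end
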